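/- For the linear ODE ẏ = -(L ⊗ I_n) y with L the Laplacian of a connected undirected graph on N vertices, the differences y_i(t) - y_j(t) → 0 exponentially as t → ∞, with rate governed by the second-smallest eigenvalue λ_2 > 0 of L: ||y_i(t) - y_j(t)|| ≤ C e^{-λ_2 t} for some constant C depending on y(0). -/

import Mathlib

open Matrix Kronecker Filter

/-!
Each coordinate slice `x i = y (i, a)` of the Kronecker system solves `ẋ = -L x`. Since `L` is
symmetric and kills constants, the disagreement vector `δ = x - (mean x) • 1` solves the same
equation and has zero sum, i.e. it stays orthogonal to `ker L`, which for a connected graph is the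
line of constants. On that complement `δ ⬝ L δ ≥ λ₂ ‖δ‖²`, so `d/dt ‖δ‖² = -2 δ ⬝ L δ ≤ -2 λ₂ ‖δ‖²`
and `‖δ(t)‖² ≤ ‖δ(0)‖² e^{-2 λ₂ t}`. Finally `(x i - x j)² = (δ i - δ j)² ≤ 2 ‖δ‖²`.
-/

theorem Matrix.IsHermitian.mul_dotProduct_self_le_of_orthogonal_ker {ι : Type*} [Fintype ι]
    [DecidableEq ι] {A : Matrix ι ι ℝ} (hA : A.IsHermitian) {lam : ℝ}
    (hlam : ∀ μ ∈ spectrum ℝ A, μ ≠ 0 → lam ≤ μ) {x : ι → ℝ}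
    (hx : ∀ v, A *ᵥ v = 0 → v ⬝ᵥ x = 0) :
    lam * (x ⬝ᵥ x) ≤ x ⬝ᵥ (A *ᵥ x) := by
  set U : Matrix ι ι ℝ := ↑hA.eigenvectorUnitary
  set D : Matrix ι ι ℝ := diagonal hA.eigenvalues
  have hstar : star U = Uᵀ := by
    rw [star_eq_conjTranspose, conjTranspose_eq_transpose_of_trivial]
  have hUUt : U * Uᵀ = 1 := hstar ▸ mem_unitaryGroup_iff.mp hA.eigenvectorUnitary.2
  have hA_eq : A = U * D * Uᵀ := by
    conv_lhs => rw [hA.spectral_theorem, Unitary.conjStarAlgAut_apply, RCLike.ofReal_real_eq_id]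
    rw [hstar]; rfl
  set c := Uᵀ *ᵥ x
  have hnorm : x ⬝ᵥ x = c ⬝ᵥ c := calc
    x ⬝ᵥ x = x ⬝ᵥ ((U * Uᵀ) *ᵥ x) := by rw [hUUt, one_mulVec]
    _ = c ⬝ᵥ c := by rw [← mulVec_mulVec, dotProduct_mulVec, ← mulVec_transpose]
  have hquad : x ⬝ᵥ (A *ᵥ x) = c ⬝ᵥ (D *ᵥ c) := by
    rw [hA_eq, ← mulVec_mulVec, ← mulVec_mulVec, dotProduct_mulVec, ← mulVec_transpose]
  have hker : ∀ k, hA.eigenvalues k = 0 → c k = 0 := fun k hk =>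
    hx (hA.eigenvectorBasis k) (by rw [hA.mulVec_eigenvectorBasis, hk, zero_smul])
  rw [hnorm, hquad]
  simp only [D, dotProduct, mulVec_diagonal, Finset.mul_sum]
  refine Finset.sum_le_sum fun k _ => ?_
  by_cases hk : hA.eigenvalues k = 0
  · simp [hker k hk]
  · have := hlam _ (hA.eigenvalues_mem_spectrum_real k) hk
    nlinarith [mul_self_nonneg (c k)]

theorem Matrix.kronecker_one_mulVec_apply {R m n : Type*} [CommSemiring R] [Fintype m] [Fintype n]
    [DecidableEq n] (L : Matrix m m R) (w : m × n → R) (i : m) (a : n) :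
    ((L ⊗ₖ (1 : Matrix n n R)) *ᵥ w) (i, a) = (L *ᵥ fun j => w (j, a)) i := by
  have hw : w = vec (of fun a j => w (j, a)) := rfl
  rw [hw, kronecker_mulVec_vec]
  simp [vec, mulVec, dotProduct, mul_apply, mul_comm]

noncomputable def disagreement {ι : Type*} [Fintype ι] (x : ι → ℝ) : ι → ℝ :=
  fun i => x i - (Fintype.card ι : ℝ)⁻¹ * ∑ j, x j

section disagreement

variable {ι : Type*} [Fintype ι]

theorem disagreement_eq_sub_smul (x : ι → ℝ) :
    disagreement x = x - ((Fintype.card ι : ℝ)⁻¹ * ∑ j, x j) • fun _ => 1 := by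
  ext i; simp [disagreement]

theorem disagreement_sub_disagreement (x : ι → ℝ) (i j : ι) :
    disagreement x i - disagreement x j = x i - x j := by
  simp only [disagreement]; ring

theorem sum_disagreement (x : ι → ℝ) : ∑ i, disagreement x i = 0 := by
  rcases isEmpty_or_nonempty ι with hι | hι
  · exact Finset.sum_of_isEmpty _
  · simp [disagreement, Finset.sum_sub_distrib]

theorem disagreement_of_sum_eq_zero {x : ι → ℝ} (hx : ∑ i, x i = 0) : disagreement x = x := by
  simp [disagreement_eq_sub_smul, hx]

theorem HasDerivAt.disagreement {x : ℝ → ι → ℝ} {x' : ι → ℝ} {t : ℝ} (hx : HasDerivAt x x' t) :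
    HasDerivAt (fun s => disagreement (x s)) (disagreement x') t :=
  hasDerivAt_pi.2 fun i => (hasDerivAt_pi.1 hx i).sub
    ((HasDerivAt.fun_sum fun j _ => hasDerivAt_pi.1 hx j).const_mul _)

theorem sq_sub_le_two_mul_dotProduct_self [DecidableEq ι] (x : ι → ℝ) (i j : ι) :
    (x i - x j) ^ 2 ≤ 2 * (x ⬝ᵥ x) := by
  rcases eq_or_ne i j with rfl | hij
  · simpa using mul_nonneg zero_le_two (dotProduct_self_star_nonneg x)
  · have : x i * x i + x j * x j ≤ x ⬝ᵥ x := calc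
      _ = ∑ k ∈ {i, j}, x k * x k := (Finset.sum_pair hij).symm
      _ ≤ x ⬝ᵥ x := Finset.sum_le_univ_sum_of_nonneg fun k => mul_self_nonneg (x k)
    nlinarith [sq_nonneg (x i + x j)]

end disagreement

namespace SimpleGraph

variable {V : Type*} [Fintype V] [DecidableEq V] (G : SimpleGraph V) [DecidableRel G.Adj]

theorem sum_lapMatrix_mulVec {R : Type*} [CommRing R] (x : V → R) :
    ∑ i, (G.lapMatrix R *ᵥ x) i = 0 := by
  calc ∑ i, (G.lapMatrix R *ᵥ x) i = (fun _ => 1) ⬝ᵥ (G.lapMatrix R *ᵥ x) := by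
        simp [dotProduct]
    _ = (G.lapMatrix R *ᵥ fun _ => 1) ⬝ᵥ x := by
        rw [dotProduct_mulVec, ← mulVec_transpose, isSymm_lapMatrix]
    _ = 0 := by rw [lapMatrix_mulVec_const_eq_zero, zero_dotProduct]

theorem lapMatrix_mulVec_disagreement (x : V → ℝ) :
    G.lapMatrix ℝ *ᵥ disagreement x = G.lapMatrix ℝ *ᵥ x := by
  rw [disagreement_eq_sub_smul, mulVec_sub, mulVec_smul, lapMatrix_mulVec_const_eq_zero,
    smul_zero, sub_zero]

variable {G}

theorem Connected.dotProduct_eq_zero_of_lapMatrix_mulVec_eq_zero (hG : G.Connected)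
    {v x : V → ℝ} (hv : G.lapMatrix ℝ *ᵥ v = 0) (hx : ∑ i, x i = 0) : v ⬝ᵥ x = 0 := by
  obtain ⟨i₀⟩ := hG.nonempty
  have hconst : v = fun _ => v i₀ := funext fun i =>
    (lapMatrix_mulVec_eq_zero_iff_forall_reachable G).1 hv i i₀ (hG.preconnected i i₀)
  rw [hconst, dotProduct, ← Finset.mul_sum, hx, mul_zero]

theorem Connected.mul_dotProduct_self_le_lapMatrix (hG : G.Connected) {lam : ℝ}
    (hlam : ∀ μ ∈ spectrum ℝ (G.lapMatrix ℝ), μ ≠ 0 → lam ≤ μ) {x : V → ℝ}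
    (hx : ∑ i, x i = 0) : lam * (x ⬝ᵥ x) ≤ x ⬝ᵥ (G.lapMatrix ℝ *ᵥ x) :=
  (posSemidef_lapMatrix ℝ G).isHermitian.mul_dotProduct_self_le_of_orthogonal_ker hlam
    fun _ hv => hG.dotProduct_eq_zero_of_lapMatrix_mulVec_eq_zero hv hx

end SimpleGraph

theorem le_mul_exp_of_hasDerivAt_le_mul {F F' : ℝ → ℝ} {c : ℝ}
    (hF : ∀ t, HasDerivAt F (F' t) t) (hle : ∀ t, F' t ≤ c * F t) {t : ℝ} (ht : 0 ≤ t) :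
    F t ≤ F 0 * Real.exp (c * t) := by
  have hg : ∀ s, HasDerivAt (fun s => F s * Real.exp (-c * s))
      (F' s * Real.exp (-c * s) - c * F s * Real.exp (-c * s)) s := fun s =>
    ((hF s).fun_mul ((hasDerivAt_id' s).const_mul (-c)).exp).congr_deriv (by ring)
  have hanti : Antitone fun s => F s * Real.exp (-c * s) :=
    antitone_of_deriv_nonpos (fun s => (hg s).differentiableAt) fun s => by
      rw [(hg s).deriv, ← sub_mul]
      exact mul_nonpos_of_nonpos_of_nonneg (sub_nonpos.2 (hle s)) (Real.exp_pos _).le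
  calc F t = F t * Real.exp (-c * t) * Real.exp (c * t) := by
        rw [mul_assoc, ← Real.exp_add, neg_mul, neg_add_cancel, Real.exp_zero, mul_one]
    _ ≤ F 0 * Real.exp (c * t) := by
        gcongr
        simpa using hanti ht

theorem HasDerivAt.dotProduct_self {ι : Type*} [Fintype ι] {z : ℝ → ι → ℝ} {z' : ι → ℝ} {t : ℝ}
    (hz : HasDerivAt z z' t) : HasDerivAt (fun s => z s ⬝ᵥ z s) (2 * (z t ⬝ᵥ z')) t := by
  refine (HasDerivAt.fun_sum fun i (_ : i ∈ Finset.univ) =>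
    (hasDerivAt_pi.1 hz i).fun_mul (hasDerivAt_pi.1 hz i)).congr_deriv ?_
  simp only [dotProduct, Finset.mul_sum]
  exact Finset.sum_congr rfl fun i _ => by ring

theorem dotProduct_self_le_mul_exp_of_hasDerivAt {ι : Type*} [Fintype ι] {A : Matrix ι ι ℝ}
    {z : ℝ → ι → ℝ} {lam : ℝ} (hz : ∀ t, HasDerivAt z (-(A *ᵥ z t)) t)
    (hA : ∀ t, lam * (z t ⬝ᵥ z t) ≤ z t ⬝ᵥ (A *ᵥ z t)) {t : ℝ} (ht : 0 ≤ t) :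
    z t ⬝ᵥ z t ≤ z 0 ⬝ᵥ z 0 * Real.exp (-(2 * lam) * t) :=
  le_mul_exp_of_hasDerivAt_le_mul (fun t => (hz t).dotProduct_self)
    (fun t => by rw [dotProduct_neg]; linarith [hA t]) ht

theorem SimpleGraph.Connected.sq_sub_le_mul_exp_of_hasDerivAt {V : Type*} [Fintype V]
    [DecidableEq V] {G : SimpleGraph V} [DecidableRel G.Adj] (hG : G.Connected) {lam : ℝ}
    (hlam : ∀ μ ∈ spectrum ℝ (G.lapMatrix ℝ), μ ≠ 0 → lam ≤ μ) {x : ℝ → V → ℝ}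
    (hx : ∀ t, HasDerivAt x (-(G.lapMatrix ℝ *ᵥ x t)) t) {t : ℝ} (ht : 0 ≤ t) (i j : V) :
    (x t i - x t j) ^ 2 ≤
      2 * (disagreement (x 0) ⬝ᵥ disagreement (x 0)) * Real.exp (-(2 * lam) * t) := by
  have hδ : ∀ t, HasDerivAt (fun s => disagreement (x s))
      (-(G.lapMatrix ℝ *ᵥ disagreement (x t))) t := fun t => by
    have h := (hx t).disagreement
    rwa [disagreement_of_sum_eq_zero (by simp [Finset.sum_neg_distrib, G.sum_lapMatrix_mulVec]),
      ← G.lapMatrix_mulVec_disagreement] at h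
  have hdecay := dotProduct_self_le_mul_exp_of_hasDerivAt hδ
    (fun s => hG.mul_dotProduct_self_le_lapMatrix hlam (sum_disagreement (x s))) ht
  rw [← disagreement_sub_disagreement, mul_assoc]
  exact (sq_sub_le_two_mul_dotProduct_self _ i j).trans
    (mul_le_mul_of_nonneg_left hdecay zero_le_two)

theorem stmt14_general {N n : ℕ} (G : SimpleGraph (Fin N)) [DecidableRel G.Adj]
    (hG : G.Connected) (lam2 : ℝ)
    (hmin : ∀ μ ∈ spectrum ℝ (G.lapMatrix ℝ), μ ≠ 0 → lam2 ≤ μ)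
    (y : ℝ → Fin N × Fin n → ℝ)
    (hode : ∀ t, HasDerivAt y
      (-((G.lapMatrix ℝ ⊗ₖ (1 : Matrix (Fin n) (Fin n) ℝ)) *ᵥ y t)) t) :
    ∃ C : ℝ, ∀ i j : Fin N, ∀ t : ℝ, 0 ≤ t →
      Real.sqrt (∑ a : Fin n, (y t (i, a) - y t (j, a)) ^ 2) ≤
        C * Real.exp (-lam2 * t) := by
  set K : Fin n → ℝ := fun a =>
    2 * (disagreement (fun i => y 0 (i, a)) ⬝ᵥ disagreement (fun i => y 0 (i, a)))
  have hcoord : ∀ a t, HasDerivAt (fun s i => y s (i, a))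
      (-(G.lapMatrix ℝ *ᵥ fun i => y t (i, a))) t := fun a t =>
    hasDerivAt_pi.2 fun i => by
      simpa [kronecker_one_mulVec_apply] using hasDerivAt_pi.1 (hode t) (i, a)
  have hK : 0 ≤ ∑ a, K a := Finset.sum_nonneg fun a _ =>
    mul_nonneg zero_le_two (dotProduct_self_star_nonneg _)
  refine ⟨Real.sqrt (∑ a, K a), fun i j t ht => Real.sqrt_le_iff.2 ⟨by positivity, ?_⟩⟩
  calc ∑ a, (y t (i, a) - y t (j, a)) ^ 2 ≤ ∑ a, K a * Real.exp (-(2 * lam2) * t) :=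
        Finset.sum_le_sum fun a _ =>
          hG.sq_sub_le_mul_exp_of_hasDerivAt hmin (hcoord a) ht i j
    _ = (Real.sqrt (∑ a, K a) * Real.exp (-lam2 * t)) ^ 2 := by
        rw [← Finset.sum_mul, mul_pow, Real.sq_sqrt hK, ← Real.exp_nat_mul]
        ring_nf

theorem stmt14 {N n : ℕ} (G : SimpleGraph (Fin N)) [DecidableRel G.Adj]
    (hG : G.Connected) (lam2 : ℝ) (hpos : 0 < lam2)
    (hmem : lam2 ∈ spectrum ℝ (G.lapMatrix ℝ))
    (hmin : ∀ μ ∈ spectrum ℝ (G.lapMatrix ℝ), μ ≠ 0 → lam2 ≤ μ)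
    (y : ℝ → Fin N × Fin n → ℝ)
    (hode : ∀ t, HasDerivAt y
      (-((G.lapMatrix ℝ ⊗ₖ (1 : Matrix (Fin n) (Fin n) ℝ)) *ᵥ y t)) t) :
    ∃ C : ℝ, ∀ i j : Fin N, ∀ t : ℝ, 0 ≤ t →
      Real.sqrt (∑ a : Fin n, (y t (i, a) - y t (j, a)) ^ 2) ≤
        C * Real.exp (-lam2 * t) :=
  stmt14_general G hG lam2 hmin y hode
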